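/- If K is naturally ordered (the natural preorder ≼_K is antisymmetric), then the natural preorder ≼_T on coalesced temporal K-elements is antisymmetric: for all coalesced k, k', if k ≼_T k' and k' ≼_T k then k = k'. -/

import Mathlib

open scoped Classical

namespace TemporalK

variable {K : Type*}

/-- An interval over the time domain `{0, ..., N-1}`: a pair `(b, e)` with `b < e ≤ N`. -/
abbrev TInterval (N : ℕ) := {I : Fin (N + 1) × Fin (N + 1) // I.1 < I.2}

/-- A temporal `K`-element: a function assigning to each interval an element of `K`. -/
abbrev TempEl (N : ℕ) (K : Type*) := TInterval N → K

/-- The interval `I = (b, e)` contains the time point `T` iff `b ≤ T < e`. -/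
def Contains {N : ℕ} (I : TInterval N) (T : ℕ) : Prop :=
  (I.val.1 : ℕ) ≤ T ∧ T < (I.val.2 : ℕ)

/-- The timeslice of `𝒯` at time point `T`: the sum of `𝒯 I` over all intervals `I`
containing `T`. -/
noncomputable def slice {N : ℕ} [CommSemiring K] (𝒯 : TempEl N K) (T : ℕ) : K :=
  ∑ I ∈ Finset.univ.filter (fun I : TInterval N => Contains I T), 𝒯 I

/-- `T` is an (annotation) changepoint of `𝒯` iff `T = 0` or the timeslices at `T - 1`
and `T` differ. -/
def Changepoint {N : ℕ} [CommSemiring K] (𝒯 : TempEl N K) (T : ℕ) : Prop :=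
  T = 0 ∨ slice 𝒯 (T - 1) ≠ slice 𝒯 T

/-- `I = (b, e)` is a changepoint interval of `𝒯` iff `b` is a changepoint, `e` is a
changepoint or equals `N`, and no time point strictly between `b` and `e` is a changepoint. -/
def CPInterval {N : ℕ} [CommSemiring K] (𝒯 : TempEl N K) (I : TInterval N) : Prop :=
  Changepoint 𝒯 (I.val.1 : ℕ) ∧
    (Changepoint 𝒯 (I.val.2 : ℕ) ∨ (I.val.2 : ℕ) = N) ∧
    ∀ T : ℕ, (I.val.1 : ℕ) < T → T < (I.val.2 : ℕ) → ¬ Changepoint 𝒯 T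

/-- `K`-coalescing: maps changepoint intervals `(b, e)` to the timeslice at `b` and all
other intervals to `0`. -/
noncomputable def coal {N : ℕ} [CommSemiring K] (𝒯 : TempEl N K) : TempEl N K :=
  fun I => if CPInterval 𝒯 I then slice 𝒯 (I.val.1 : ℕ) else 0

/-- Snapshot equivalence: equal timeslices at every time point. -/
def SnapEq {N : ℕ} [CommSemiring K] (k k' : TempEl N K) : Prop :=
  ∀ T : ℕ, T < N → slice k T = slice k' T

/-- A temporal `K`-element is coalesced iff it is the `K`-coalescing of some
temporal `K`-element. -/
def Coalesced {N : ℕ} [CommSemiring K] (k : TempEl N K) : Prop :=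
  ∃ 𝒯 : TempEl N K, k = coal 𝒯

/-- Pointwise addition of temporal `K`-elements. -/
def padd {N : ℕ} [CommSemiring K] (k k' : TempEl N K) : TempEl N K :=
  fun I => k I + k' I

/-- Pointwise multiplication of temporal `K`-elements:
`(k ·_P k')(I) = Σ k(I')·k'(I'')` over all pairs `(I', I'')` whose intersection is
nonempty and equals `I`. -/
noncomputable def pmul {N : ℕ} [CommSemiring K] (k k' : TempEl N K) : TempEl N K :=
  fun I =>
    ∑ p ∈ Finset.univ.filter (fun p : TInterval N × TInterval N =>
        max (p.1.val.1 : ℕ) (p.2.val.1 : ℕ) < min (p.1.val.2 : ℕ) (p.2.val.2 : ℕ) ∧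
        (I.val.1 : ℕ) = max (p.1.val.1 : ℕ) (p.2.val.1 : ℕ) ∧
        (I.val.2 : ℕ) = min (p.1.val.2 : ℕ) (p.2.val.2 : ℕ)),
      k p.1 * k' p.2

/-- Addition of the period semiring: coalesced pointwise addition. -/
noncomputable def tadd {N : ℕ} [CommSemiring K] (k k' : TempEl N K) : TempEl N K :=
  coal (padd k k')

/-- Multiplication of the period semiring: coalesced pointwise multiplication. -/
noncomputable def tmul {N : ℕ} [CommSemiring K] (k k' : TempEl N K) : TempEl N K :=
  coal (pmul k k')

/-- The zero of the period semiring: maps every interval to `0`. -/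
def zeroT (N : ℕ) (K : Type*) [CommSemiring K] : TempEl N K := fun _ => 0

/-- The one of the period semiring: maps the interval `(0, N)` to `1` and every other
interval to `0`. -/
def oneT (N : ℕ) (K : Type*) [CommSemiring K] : TempEl N K :=
  fun I => if (I.val.1 : ℕ) = 0 ∧ (I.val.2 : ℕ) = N then 1 else 0

/-- Encoding of an annotation history `f : time points → K` as a coalesced temporal
`K`-element: coalesce the element assigning `f T` to each singleton interval `(T, T+1)`. -/
noncomputable def enc {N : ℕ} [CommSemiring K] (f : Fin N → K) : TempEl N K :=
  coal (fun I =>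
    if h : (I.val.2 : ℕ) = (I.val.1 : ℕ) + 1 then
      f ⟨(I.val.1 : ℕ), by have := I.val.2.isLt; omega⟩
    else 0)

/-- The natural preorder of the semiring `K`. -/
def nle [CommSemiring K] (a b : K) : Prop := ∃ c, a + c = b

/-- The natural preorder of the period semiring (on coalesced temporal `K`-elements). -/
def tle {N : ℕ} [CommSemiring K] (k k' : TempEl N K) : Prop :=
  ∃ k'' : TempEl N K, Coalesced k'' ∧ tadd k k'' = k'

/-- The pointwise monus: assigns `τ_T(k) −_K τ_T(k')` to each singleton interval
`(T, T+1)` and `0` to every non-singleton interval. -/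
noncomputable def pmonus {N : ℕ} [CommSemiring K] (monus : K → K → K)
    (k k' : TempEl N K) : TempEl N K :=
  fun I =>
    if (I.val.2 : ℕ) = (I.val.1 : ℕ) + 1 then
      monus (slice k (I.val.1 : ℕ)) (slice k' (I.val.1 : ℕ))
    else 0

/-- The monus of the period semiring: coalesced pointwise monus. -/
noncomputable def tmonus {N : ℕ} [CommSemiring K] (monus : K → K → K)
    (k k' : TempEl N K) : TempEl N K :=
  coal (pmonus monus k k')

end TemporalK

/-!
A coalesced element is determined by its timeslices: coalescing depends only on the timeslices
and does not change them, so `coal k = k` for coalesced `k`. The timeslices of `k +_T k''` are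
the sums of those of `k` and `k''`, hence `k ≼_T k'` gives `τ_T(k) ≼_K τ_T(k')` at every time
point. Antisymmetry of `≼_K` then makes all timeslices of `k` and `k'` equal, so `k = k'`.
-/

namespace TemporalK

variable {N : ℕ} {K : Type*} [CommSemiring K]

theorem slice_padd (k k' : TempEl N K) (T : ℕ) :
    slice (padd k k') T = slice k T + slice k' T := by
  simp [slice, padd, Finset.sum_add_distrib]

theorem slice_eq_zero_of_le (𝒯 : TempEl N K) {T : ℕ} (hT : N ≤ T) : slice 𝒯 T = 0 := by
  refine Finset.sum_eq_zero fun I hI => ?_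
  have hIT := (Finset.mem_filter.mp hI).2.2
  have hIN : (I.val.2 : ℕ) ≤ N := Fin.is_le _
  omega

theorem slice_eq_of_forall_not_changepoint (𝒯 : TempEl N K) {b T : ℕ} (hbT : b ≤ T)
    (h : ∀ s, b < s → s ≤ T → ¬ Changepoint 𝒯 s) :
    slice 𝒯 b = slice 𝒯 T := by
  induction T, hbT using Nat.le_induction with
  | base => rfl
  | succ T hbT ih =>
    have hstep : slice 𝒯 T = slice 𝒯 (T + 1) := by
      simpa [Changepoint] using h (T + 1) (by omega) le_rfl
    rw [← hstep]
    exact ih fun s hbs hsT => h s hbs (by omega)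

/-- The changepoint interval containing `T` runs from the last changepoint `≤ T` to the first
changepoint `> T` (or to `N`). -/
theorem exists_cpInterval_contains (𝒯 : TempEl N K) {T : ℕ} (hT : T < N) :
    ∃ I : TInterval N, CPInterval 𝒯 I ∧ Contains I T := by
  have hend : ∃ e, T < e ∧ (Changepoint 𝒯 e ∨ e = N) := ⟨N, hT, Or.inr rfl⟩
  set b := Nat.findGreatest (Changepoint 𝒯) T
  set e := Nat.find hend
  have hbT : b ≤ T := Nat.findGreatest_le T
  have he : T < e ∧ (Changepoint 𝒯 e ∨ e = N) := Nat.find_spec hend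
  have heN : e ≤ N := Nat.find_min' hend ⟨hT, Or.inr rfl⟩
  refine ⟨⟨(⟨b, by omega⟩, ⟨e, by omega⟩), by simp only [Fin.mk_lt_mk]; omega⟩,
    ⟨Nat.findGreatest_spec (Nat.zero_le T) (Or.inl rfl), he.2, fun s hbs hse hs => ?_⟩,
    hbT, he.1⟩
  by_cases hsT : s ≤ T
  · exact Nat.findGreatest_is_greatest hbs hsT hs
  · exact Nat.find_min hend hse ⟨by omega, Or.inl hs⟩

theorem CPInterval.le_of_contains {𝒯 : TempEl N K} {I J : TInterval N} {T : ℕ}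
    (hI : CPInterval 𝒯 I) (hJ : CPInterval 𝒯 J) (hIT : Contains I T) (hJT : Contains J T) :
    (J.val.1 : ℕ) ≤ I.val.1 ∧ (I.val.2 : ℕ) ≤ J.val.2 := by
  obtain ⟨-, -, hI_int⟩ := hI
  obtain ⟨hJ_start, hJ_end, -⟩ := hJ
  have hIN : (I.val.2 : ℕ) ≤ N := Fin.is_le _
  constructor
  · by_contra! hlt
    exact hI_int _ hlt (by unfold Contains at hIT hJT; omega) hJ_start
  · by_contra! hlt
    have hJ_end' : Changepoint 𝒯 J.val.2 := hJ_end.resolve_right (by omega)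
    exact hI_int _ (by unfold Contains at hIT hJT; omega) hlt hJ_end'

theorem CPInterval.eq_of_contains {𝒯 : TempEl N K} {I J : TInterval N} {T : ℕ}
    (hI : CPInterval 𝒯 I) (hJ : CPInterval 𝒯 J) (hIT : Contains I T) (hJT : Contains J T) :
    I = J := by
  obtain ⟨h₁, h₂⟩ := hI.le_of_contains hJ hIT hJT
  obtain ⟨h₁', h₂'⟩ := hJ.le_of_contains hI hJT hIT
  exact Subtype.ext (Prod.ext (Fin.ext (by omega)) (Fin.ext (by omega)))

theorem slice_coal (𝒯 : TempEl N K) {T : ℕ} (hT : T < N) : slice (coal 𝒯) T = slice 𝒯 T := by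
  obtain ⟨I, hI, hIT⟩ := exists_cpInterval_contains 𝒯 hT
  rw [slice, Finset.sum_eq_single_of_mem I (by simp [hIT])]
  · rw [coal, if_pos hI]
    exact slice_eq_of_forall_not_changepoint 𝒯 hIT.1 fun s hbs hsT =>
      hI.2.2 s hbs (hsT.trans_lt hIT.2)
  · intro J hJ hJI
    exact if_neg fun hJ' => hJI (hJ'.eq_of_contains hI (Finset.mem_filter.mp hJ).2 hIT)

theorem SnapEq.slice_eq {𝒯 𝒯' : TempEl N K} (h : SnapEq 𝒯 𝒯') (T : ℕ) :
    slice 𝒯 T = slice 𝒯' T := by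
  by_cases hT : T < N
  · exact h T hT
  · rw [slice_eq_zero_of_le 𝒯 (not_lt.mp hT), slice_eq_zero_of_le 𝒯' (not_lt.mp hT)]

theorem coal_eq_coal_of_snapEq {𝒯 𝒯' : TempEl N K} (h : SnapEq 𝒯 𝒯') : coal 𝒯 = coal 𝒯' := by
  have hslice : slice 𝒯 = slice 𝒯' := funext h.slice_eq
  unfold coal CPInterval Changepoint
  rw [hslice]

theorem snapEq_coal (𝒯 : TempEl N K) : SnapEq (coal 𝒯) 𝒯 := fun _ hT => slice_coal 𝒯 hT

theorem Coalesced.coal_eq {k : TempEl N K} (hk : Coalesced k) : coal k = k := by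
  obtain ⟨𝒯, rfl⟩ := hk
  exact coal_eq_coal_of_snapEq (snapEq_coal 𝒯)

theorem slice_tadd (k k' : TempEl N K) {T : ℕ} (hT : T < N) :
    slice (tadd k k') T = slice k T + slice k' T := by
  rw [tadd, slice_coal _ hT, slice_padd]

theorem nle_slice_of_tle {k k' : TempEl N K} (h : tle k k') {T : ℕ} (hT : T < N) :
    nle (slice k T) (slice k' T) := by
  obtain ⟨k'', -, rfl⟩ := h
  exact ⟨slice k'' T, (slice_tadd k k'' hT).symm⟩

end TemporalK

open TemporalK

theorem tle_antisymm_general {N : ℕ} {K : Type*} [CommSemiring K]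
    (hanti : ∀ a b : K, nle a b → nle b a → a = b)
    (k k' : TempEl N K) (hk : Coalesced k) (hk' : Coalesced k')
    (h1 : tle k k') (h2 : tle k' k) :
    k = k' := by
  have hsnap : SnapEq k k' := fun T hT =>
    hanti _ _ (nle_slice_of_tle h1 hT) (nle_slice_of_tle h2 hT)
  rw [← hk.coal_eq, ← hk'.coal_eq]
  exact coal_eq_coal_of_snapEq hsnap

theorem tle_antisymm {N : ℕ} (hN : 1 ≤ N) {K : Type*} [CommSemiring K]
    (hanti : ∀ a b : K, nle a b → nle b a → a = b)
    (k k' : TempEl N K) (hk : Coalesced k) (hk' : Coalesced k')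
    (h1 : tle k k') (h2 : tle k' k) :
    k = k' :=
  tle_antisymm_general hanti k k' hk hk' h1 h2
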